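/- arXiv:1210.3229 — 2 statements merged into one kernel-verified Lean document; each statement's English description precedes it below -/
import Mathlib

section
/- For every integer i ≥ 0, the map (t₀, …, t_i) ↦ ∫_{Σ_{j=0}^{i−1} t_j}^{Σ_{j=0}^{i} t_j} g(s) · ∏_{k=0}^{i} F(t_k, s − Σ_{j=0}^{k−1} t_j) ds is continuous on the domain {(t₀, …, t_i) : t_j > 0 for all j, and Σ_{j=0}^{i} t_j < Δ} (empty sums being 0). -/
open Real Set Filter MeasureTheory

/-- Conditional ISI density `F t s` given time-to-live `s` of the feedback impulse. -/
noncomputable def F (lam τ t s : ℝ) : ℝ :=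
  if 0 < t ∧ t < s then lam ^ 2 * t * Real.exp (-lam * t)
  else if s ≤ t ∧ t ≤ s + τ then
    (1 + lam * s) * Real.exp (-lam * s) * (lam ^ 2 * (t - s) * Real.exp (-lam * (t - s)))
  else 0

/-- Regular part of the stationary time-to-live density. -/
noncomputable def g (lam A B s : ℝ) : ℝ := A + B * Real.exp (2 * lam * s)

/-- Weight of the singular (Dirac) part of the stationary time-to-live distribution. -/
noncomputable def aC (lam Δ : ℝ) : ℝ :=
  4 * Real.exp (2 * lam * Δ) / ((3 + 2 * lam * Δ) * Real.exp (2 * lam * Δ) + 1)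

/-- `T t p q = Σ_{j=p}^{q-1} t_j` (empty sums are `0`). -/
def T {n : ℕ} (t : Fin n → ℝ) (p q : ℕ) : ℝ :=
  ∑ j : Fin n, if p ≤ (j : ℕ) ∧ (j : ℕ) < q then t j else 0

/-- `Ilow lam Δ τ A B i t` is the term `I_i`, `0 ≤ i ≤ m-1`, of the joint ISI density. -/
noncomputable def Ilow (lam Δ τ A B : ℝ) {m : ℕ} (i : ℕ) (t : Fin (m + 1) → ℝ) : ℝ :=
  (∏ k : Fin (m + 1), if i + 1 ≤ (k : ℕ) then F lam τ (t k) (Δ - T t (i + 1) (k : ℕ)) else 1) *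
    ∫ s in T t 0 i..T t 0 (i + 1),
      g lam A B s *
        ∏ k : Fin (m + 1), if (k : ℕ) ≤ i then F lam τ (t k) (s - T t 0 (k : ℕ)) else 1

/-- `Itop lam Δ τ A B t` is the term `I_m` of the joint ISI density. -/
noncomputable def Itop (lam Δ τ A B : ℝ) {m : ℕ} (t : Fin (m + 1) → ℝ) : ℝ :=
  (∫ s in T t 0 m..Δ, g lam A B s * ∏ k : Fin (m + 1), F lam τ (t k) (s - T t 0 (k : ℕ)))
    + aC lam Δ * ∏ k : Fin (m + 1), F lam τ (t k) (Δ - T t 0 (k : ℕ))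

/-- `J lam Δ τ A B t = Σ_{i=0}^{m} I_i(t)`, the joint density of `m+1` consecutive ISIs. -/
noncomputable def J (lam Δ τ A B : ℝ) {m : ℕ} (t : Fin (m + 1) → ℝ) : ℝ :=
  (∑ i ∈ Finset.range m, Ilow lam Δ τ A B i t) + Itop lam Δ τ A B t

/-!
For `s ∈ (T t 0 i, T t 0 (i + 1)]` every factor `F (t k) (s - T t 0 k)` with `k < i` lies in the
first branch of `F`, because `s - T t 0 k > t k`, and the last factor lies in the second branch,
because `0 < s - T t 0 i ≤ t i < Δ < τ`. So on the range of integration the integrand agrees with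
a function jointly continuous in `(t, s)`, and an integral of such a function between continuous
bounds depends continuously on the parameter.
-/

theorem continuous_parametric_intervalIntegral_of_continuous_bounds {X E : Type*}
    [TopologicalSpace X] [NormedAddCommGroup E] [NormedSpace ℝ E] {μ : Measure ℝ}
    [IsLocallyFiniteMeasure μ] [NullSingletonClass μ] {f : X → ℝ → E} (hf : Continuous f.uncurry)
    {a b : X → ℝ} (ha : Continuous a) (hb : Continuous b) :
    Continuous fun x ↦ ∫ t in a x..b x, f x t ∂μ := by
  have hint (x : X) (u v : ℝ) : IntervalIntegrable (f x) μ u v :=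
    (hf.uncurry_left x).intervalIntegrable u v
  have hsplit (x : X) : ∫ t in a x..b x, f x t ∂μ =
      (∫ t in 0..b x, f x t ∂μ) - ∫ t in 0..a x, f x t ∂μ :=
    (intervalIntegral.integral_interval_sub_left (hint _ _ _) (hint _ _ _)).symm
  simp only [hsplit]
  exact (intervalIntegral.continuous_parametric_intervalIntegral_of_continuous hf hb).sub
    (intervalIntegral.continuous_parametric_intervalIntegral_of_continuous hf ha)

@[fun_prop]
theorem continuous_T {n : ℕ} (p q : ℕ) : Continuous fun t : Fin n → ℝ ↦ T t p q := by
  refine continuous_finsetSum _ fun j _ ↦ ?_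
  split_ifs
  exacts [continuous_apply j, continuous_const]

theorem T_zero_succ {n : ℕ} (t : Fin n → ℝ) (k : Fin n) :
    T t 0 ((k : ℕ) + 1) = T t 0 k + t k := by
  have hsplit (j : Fin n) : (if 0 ≤ (j : ℕ) ∧ (j : ℕ) < k + 1 then t j else 0) =
      (if 0 ≤ (j : ℕ) ∧ (j : ℕ) < k then t j else 0) + if k = j then t j else 0 := by
    rcases lt_trichotomy (j : ℕ) k with h | h | h
    · simp [h, h.trans (Nat.lt_succ_self _), Fin.ne_of_gt h]
    · simp [Fin.ext h]
    · simp [h.not_gt, (Nat.succ_le_of_lt h).not_gt, Fin.ne_of_lt h]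
  simp only [T, hsplit, Finset.sum_add_distrib, Finset.sum_ite_eq, Finset.mem_univ, if_true]

theorem T_nonneg {n : ℕ} {t : Fin n → ℝ} (ht : ∀ j, 0 ≤ t j) (p q : ℕ) : 0 ≤ T t p q :=
  Finset.sum_nonneg fun j _ ↦ by
    split_ifs
    exacts [ht j, le_rfl]

theorem T_zero_monotone {n : ℕ} {t : Fin n → ℝ} (ht : ∀ j, 0 ≤ t j) : Monotone (T t 0) :=
  fun q r hqr ↦ Finset.sum_le_sum fun j _ ↦ by
    by_cases hq : (j : ℕ) < q
    · simp [hq, hq.trans_le hqr]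
    · simp only [hq, and_false, if_false]
      split_ifs
      exacts [ht j, le_rfl]

/-- Density of the arrival time of the second impulse of a Poisson stream of intensity `lam`. -/
noncomputable def erlang2 (lam t : ℝ) : ℝ := lam ^ 2 * t * exp (-lam * t)

@[fun_prop]
theorem continuous_erlang2 (lam : ℝ) : Continuous (erlang2 lam) := by
  unfold erlang2
  fun_prop

theorem F_of_lt {lam τ t s : ℝ} (ht : 0 < t) (hts : t < s) : F lam τ t s = erlang2 lam t := by
  rw [F, if_pos ⟨ht, hts⟩, erlang2]

theorem F_of_le {lam τ t s : ℝ} (hst : s ≤ t) (hts : t ≤ s + τ) :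
    F lam τ t s = (1 + lam * s) * exp (-lam * s) * erlang2 lam (t - s) := by
  rw [F, if_neg fun h ↦ hst.not_gt h.2, if_pos ⟨hst, hts⟩, erlang2]

theorem prod_F_sub_T_eq {lam τ s : ℝ} {i : ℕ} {t : Fin (i + 1) → ℝ} (ht : ∀ j, 0 < t j)
    (hτ : t (Fin.last i) ≤ τ) (hs : s ∈ Ioc (T t 0 i) (T t 0 (i + 1))) :
    ∏ k : Fin (i + 1), F lam τ (t k) (s - T t 0 k) =
      (∏ k : Fin i, erlang2 lam (t k.castSucc)) *
        ((1 + lam * (s - T t 0 i)) * exp (-lam * (s - T t 0 i)) *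
          erlang2 lam (t (Fin.last i) - (s - T t 0 i))) := by
  have hmono := T_zero_monotone fun j ↦ (ht j).le
  have hT_last : T t 0 (i + 1) = T t 0 i + t (Fin.last i) := T_zero_succ t (Fin.last i)
  rw [Fin.prod_univ_castSucc, Fin.val_last]
  congr 1
  · refine Finset.prod_congr rfl fun k _ ↦ F_of_lt (ht _) ?_
    have hk : T t 0 ((k : ℕ) + 1) ≤ T t 0 i := hmono k.isLt
    have := T_zero_succ t k.castSucc
    rw [Fin.val_castSucc] at this ⊢
    linarith [hs.1]
  · refine F_of_le (by linarith [hs.2]) ?_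
    linarith [hs.1]

theorem stmt4_general (lam Δ τ A B : ℝ) (hΔτ : Δ < τ) (i : ℕ) :
    ContinuousOn
      (fun t : Fin (i + 1) → ℝ =>
        ∫ s in T t 0 i..T t 0 (i + 1),
          g lam A B s * ∏ k : Fin (i + 1), F lam τ (t k) (s - T t 0 (k : ℕ)))
      {t : Fin (i + 1) → ℝ | (∀ j, 0 < t j) ∧ T t 0 (i + 1) < Δ} := by
  set G : (Fin (i + 1) → ℝ) → ℝ → ℝ := fun t s ↦ g lam A B s *
    ((∏ k : Fin i, erlang2 lam (t k.castSucc)) *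
      ((1 + lam * (s - T t 0 i)) * exp (-lam * (s - T t 0 i)) *
        erlang2 lam (t (Fin.last i) - (s - T t 0 i))))
  have hG : Continuous G.uncurry := by
    unfold G g
    fun_prop
  refine (continuous_parametric_intervalIntegral_of_continuous_bounds (μ := volume) hG
    (continuous_T 0 i) (continuous_T 0 (i + 1))).continuousOn.congr fun t ⟨ht, htΔ⟩ ↦ ?_
  have hT_last : T t 0 (i + 1) = T t 0 i + t (Fin.last i) := T_zero_succ t (Fin.last i)
  have hT_nonneg : 0 ≤ T t 0 i := T_nonneg (fun j ↦ (ht j).le) 0 i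
  refine intervalIntegral.integral_congr_ae (ae_of_all _ fun s hs ↦ ?_)
  rw [uIoc_of_le (by linarith [ht (Fin.last i)])] at hs
  rw [prod_F_sub_T_eq ht (by linarith) hs]

/-- for every `i ≥ 0`, the integral factor
`(t₀,…,t_i) ↦ ∫_{Σ_{j<i} t_j}^{Σ_{j≤i} t_j} g(s) ∏_{k=0}^{i} F(t_k, s − Σ_{j<k} t_j) ds`
is continuous on `{t_j > 0 ∀ j, Σ_{j=0}^{i} t_j < Δ}`. -/
theorem stmt4 (lam Δ τ A B : ℝ) (hlam : 0 < lam) (hΔ : 0 < Δ) (hΔτ : Δ < τ) (i : ℕ) :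
    ContinuousOn
      (fun t : Fin (i + 1) → ℝ =>
        ∫ s in T t 0 i..T t 0 (i + 1),
          g lam A B s * ∏ k : Fin (i + 1), F lam τ (t k) (s - T t 0 (k : ℕ)))
      {t : Fin (i + 1) → ℝ | (∀ j, 0 < t j) ∧ T t 0 (i + 1) < Δ} :=
  stmt4_general lam Δ τ A B hΔτ i
end

section
/- Let t₀ ∈ (0, Δ). Then the one-sided limits of t₁ ↦ J_1(t₀, t₁) at t₁ = Δ exist, and (limit from below) − (limit from above) = λ²·Δ·exp(−λ·Δ) · ∫₀^{t₀} g(s) F(t₀, s) ds; if moreover g(s) > 0 for all s ∈ (0, Δ), this jump is strictly positive. Thus the joint density of two consecutive interspike intervals has a jump across the line t₁ = Δ. -/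
/-!
For `Δ - t₀ ≤ t₁ ≤ τ`, every `F(t₁, ·)` in the last two terms of `J1` is evaluated in its second
branch, and `F(t₀, s) = λ²t₀e^{-λt₀}` for `s ∈ (t₀, Δ]`; so these terms are continuous in `t₁`
at `Δ`. Only the factor `F(t₁, Δ)` of the first term jumps there: it tends to `λ²Δe^{-λΔ}` from
below and to `0` from above.
-/

open Real Set Filter MeasureTheory

/-- Joint density of two consecutive ISIs (valid for `0 < t₀ < Δ`, `0 < t₁ < τ`). -/
noncomputable def J1 (lam Δ τ A B t₀ t₁ : ℝ) : ℝ :=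
  F lam τ t₁ Δ * (∫ s in (0 : ℝ)..t₀, g lam A B s * F lam τ t₀ s)
    + (∫ s in t₀..Δ, F lam τ t₁ (s - t₀) * F lam τ t₀ s * g lam A B s)
    + aC lam Δ * F lam τ t₁ (Δ - t₀) * F lam τ t₀ Δ

open Topology

noncomputable def Flate (lam s t : ℝ) : ℝ :=
  (1 + lam * s) * exp (-lam * s) * (lam ^ 2 * (t - s) * exp (-lam * (t - s)))

section F

variable {lam τ t s : ℝ}

lemma F_of_pos_of_lt (ht : 0 < t) (hts : t < s) : F lam τ t s = lam ^ 2 * t * exp (-lam * t) :=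
  if_pos ⟨ht, hts⟩

lemma F_of_le_of_le (hst : s ≤ t) (ht : t ≤ s + τ) : F lam τ t s = Flate lam s t := by
  rw [F, if_neg fun h => (h.2.trans_le hst).false, if_pos ⟨hst, ht⟩, Flate]

lemma tendsto_F_nhdsLT (hs : 0 < s) :
    Tendsto (fun t => F lam τ t s) (𝓝[<] s) (𝓝 (lam ^ 2 * s * exp (-lam * s))) := by
  have hcont : Continuous fun t : ℝ => lam ^ 2 * t * exp (-lam * t) := by fun_prop
  refine (hcont.tendsto s).mono_left nhdsWithin_le_nhds |>.congr' ?_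
  filter_upwards [Ioo_mem_nhdsLT hs] with t ht
  exact (F_of_pos_of_lt ht.1 ht.2).symm

lemma tendsto_F_nhdsGT (hτ : 0 < τ) : Tendsto (fun t => F lam τ t s) (𝓝[>] s) (𝓝 0) := by
  have hcont : Continuous (Flate lam s) := by unfold Flate; fun_prop
  have hzero : Flate lam s s = 0 := by simp [Flate]
  refine hzero ▸ (hcont.tendsto s).mono_left nhdsWithin_le_nhds |>.congr' ?_
  filter_upwards [Ioo_mem_nhdsGT (show s < s + τ by linarith)] with t ht
  exact (F_of_le_of_le ht.1.le ht.2.le).symm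

lemma integral_mul_F_pos {f : ℝ → ℝ} (hf : Continuous f) (hlam : 0 < lam) (ht : 0 < t)
    (htτ : t ≤ τ) (hpos : ∀ s ∈ Ioo 0 t, 0 < f s) : 0 < ∫ s in (0 : ℝ)..t, f s * F lam τ t s := by
  have hF : (∫ s in (0 : ℝ)..t, f s * F lam τ t s) = ∫ s in (0 : ℝ)..t, f s * Flate lam s t := by
    refine intervalIntegral.integral_congr_ae (ae_of_all _ fun s hs => ?_)
    rw [uIoc_of_le ht.le] at hs
    rw [F_of_le_of_le hs.2 (by linarith [hs.1])]
  rw [hF]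
  refine intervalIntegral.intervalIntegral_pos_of_pos_on ?_ (fun s hs => ?_) ht
  · exact Continuous.intervalIntegrable (by unfold Flate; fun_prop) _ _
  · have h1 : 0 < 1 + lam * s := by nlinarith [hs.1]
    have h2 : 0 < t - s := by linarith [hs.2]
    unfold Flate
    exact mul_pos (hpos s hs) (by positivity)

end F

noncomputable def J1tail (lam Δ τ A B t₀ t₁ : ℝ) : ℝ :=
  (∫ s in t₀..Δ, F lam τ t₁ (s - t₀) * F lam τ t₀ s * g lam A B s)
    + aC lam Δ * F lam τ t₁ (Δ - t₀) * F lam τ t₀ Δ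

lemma J1_eq_mul_add_J1tail (lam Δ τ A B t₀ t₁ : ℝ) :
    J1 lam Δ τ A B t₀ t₁ =
      F lam τ t₁ Δ * (∫ s in (0 : ℝ)..t₀, g lam A B s * F lam τ t₀ s) + J1tail lam Δ τ A B t₀ t₁ :=
  add_assoc _ _ _

section J1tail

variable {lam Δ τ A B t₀ t₁ : ℝ}

lemma J1tail_eq (ht₀ : t₀ ∈ Ioo 0 Δ) (hlow : Δ - t₀ ≤ t₁) (hup : t₁ ≤ τ) :
    J1tail lam Δ τ A B t₀ t₁ = lam ^ 2 * t₀ * exp (-lam * t₀) *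
      ((∫ s in t₀..Δ, Flate lam (s - t₀) t₁ * g lam A B s) + aC lam Δ * Flate lam (Δ - t₀) t₁) := by
  have hint : (∫ s in t₀..Δ, F lam τ t₁ (s - t₀) * F lam τ t₀ s * g lam A B s)
      = ∫ s in t₀..Δ, lam ^ 2 * t₀ * exp (-lam * t₀) * (Flate lam (s - t₀) t₁ * g lam A B s) := by
    refine intervalIntegral.integral_congr_ae (ae_of_all _ fun s hs => ?_)
    rw [uIoc_of_le ht₀.2.le] at hs
    rw [F_of_pos_of_lt ht₀.1 hs.1, F_of_le_of_le (by linarith [hs.2]) (by linarith [hs.1])]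
    ring
  rw [J1tail, hint, intervalIntegral.integral_const_mul, F_of_pos_of_lt ht₀.1 ht₀.2,
    F_of_le_of_le hlow (by linarith [ht₀.2])]
  ring

lemma continuousAt_J1tail (hΔτ : Δ < τ) (ht₀ : t₀ ∈ Ioo 0 Δ) :
    ContinuousAt (J1tail lam Δ τ A B t₀) Δ := by
  have hcont : Continuous fun t₁ => lam ^ 2 * t₀ * exp (-lam * t₀) *
      ((∫ s in t₀..Δ, Flate lam (s - t₀) t₁ * g lam A B s) + aC lam Δ * Flate lam (Δ - t₀) t₁) := by
    unfold Flate g; fun_prop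
  refine hcont.continuousAt.congr ?_
  filter_upwards [Ioo_mem_nhds (show Δ - t₀ < Δ by linarith [ht₀.1]) hΔτ] with t₁ ht₁
  exact (J1tail_eq ht₀ ht₁.1.le ht₁.2.le).symm

end J1tail

/-- for `t₀ ∈ (0, Δ)`, the map `t₁ ↦ J1(t₀,t₁)` has one-sided limits at
`t₁ = Δ` and (left limit) − (right limit) `= λ²Δe^{−λΔ} · ∫₀^{t₀} g(s) F(t₀,s) ds`;
if moreover `g > 0` on `(0,Δ)`, the jump is strictly positive. -/
theorem stmt17 (lam Δ τ A B : ℝ) (hlam : 0 < lam) (hΔ : 0 < Δ) (hΔτ : Δ < τ)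
    (t₀ : ℝ) (ht₀ : t₀ ∈ Set.Ioo (0 : ℝ) Δ) :
    ∃ L₁ L₂ : ℝ,
      Filter.Tendsto (fun t₁ => J1 lam Δ τ A B t₀ t₁)
        (nhdsWithin Δ (Set.Iio Δ)) (nhds L₁) ∧
      Filter.Tendsto (fun t₁ => J1 lam Δ τ A B t₀ t₁)
        (nhdsWithin Δ (Set.Ioi Δ)) (nhds L₂) ∧
      L₁ - L₂ =
        lam ^ 2 * Δ * Real.exp (-lam * Δ) *
          ∫ s in (0 : ℝ)..t₀, g lam A B s * F lam τ t₀ s ∧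
      ((∀ s ∈ Set.Ioo (0 : ℝ) Δ, 0 < g lam A B s) → 0 < L₁ - L₂) := by
  set C := ∫ s in (0 : ℝ)..t₀, g lam A B s * F lam τ t₀ s
  have htail := (continuousAt_J1tail (lam := lam) (A := A) (B := B) hΔτ ht₀).tendsto
  simp_rw [J1_eq_mul_add_J1tail]
  refine ⟨lam ^ 2 * Δ * exp (-lam * Δ) * C + J1tail lam Δ τ A B t₀ Δ,
    0 * C + J1tail lam Δ τ A B t₀ Δ,
    ((tendsto_F_nhdsLT hΔ).mul_const C).add (htail.mono_left nhdsWithin_le_nhds),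
    ((tendsto_F_nhdsGT (hΔ.trans hΔτ)).mul_const C).add (htail.mono_left nhdsWithin_le_nhds),
    by ring, fun hg => ?_⟩
  have hC : 0 < C := integral_mul_F_pos (by unfold g; fun_prop) hlam ht₀.1
    (by linarith [ht₀.2]) fun s hs => hg s ⟨hs.1, hs.2.trans ht₀.2⟩
  have : 0 < lam ^ 2 * Δ * exp (-lam * Δ) * C := by positivity
  linarith
end
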